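/- arXiv:math/0605737 — 2 statements merged into one kernel-verified Lean document; each statement's English description precedes it below -/
import Mathlib

section
/- Let R* = H*(B) be the cohomology of a closed 4-manifold B and M* the free R-module with basis 1, u, …, uⁿ, made into a ring by u^{n+1} = β₄ u^{n−1} + β₂ uⁿ (β₂ ∈ H²(B), β₄ ∈ H⁴(B)), grading deg u = 2. Suppose 1 ≤ k < n and n − k is odd. If α = b₃ u^{(n−k−1)/2} + b₁ u^{(n−k+1)/2} with b₁ ∈ H¹(B), b₃ ∈ H³(B) satisfies (x+u)^k α = 0 for x ∈ H²(B), then b₁ = 0 and b₃ = 0. -/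
/-!
Write `n - k = 2t + 1`. The class `(x + u)^k α` is the image in `R[u]/(p)` of
`(x + u)^k u^t (b₃ + b₁ u)`, a polynomial of degree at most `k + t + 1 ≤ n`. Since `p` is monic of
degree `n + 1`, it divides no nonzero polynomial of smaller degree, so this product already vanishes
in `R[u]`. Its factor `(x + u)^k u^t` is monic, hence not a zero divisor, so `b₃ + b₁ u = 0`.
-/

open Polynomial

namespace Polynomial

variable {R : Type*} [CommRing R]

theorem degree_C_mul_X_pow_add_C_mul_X_pow_pred_lt (n : ℕ) (a b : R) :
    (C a * X ^ n + C b * X ^ (n - 1)).degree < ↑(n + 1) := by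
  compute_degree
  exact WithBot.coe_lt_coe.2 n.lt_succ_self

theorem monic_X_pow_succ_sub_C_mul_X_pow_sub_C_mul_X_pow_pred (n : ℕ) (a b : R) :
    (X ^ (n + 1) - C a * X ^ n - C b * X ^ (n - 1)).Monic := by
  rw [sub_sub]
  exact monic_X_pow_sub (degree_C_mul_X_pow_add_C_mul_X_pow_pred_lt n a b)

theorem natDegree_X_pow_succ_sub_C_mul_X_pow_sub_C_mul_X_pow_pred [Nontrivial R] (n : ℕ)
    (a b : R) : (X ^ (n + 1) - C a * X ^ n - C b * X ^ (n - 1)).natDegree = n + 1 := by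
  rw [sub_sub]
  refine natDegree_eq_of_degree_eq_some <| (degree_sub_eq_left_of_degree_lt ?_).trans
    (degree_X_pow _)
  simpa using degree_C_mul_X_pow_add_C_mul_X_pow_pred_lt n a b

theorem C_add_C_mul_X_eq_zero_iff {a b : R} : C a + C b * X = 0 ↔ a = 0 ∧ b = 0 := by
  refine ⟨fun h ↦ ⟨by simpa using congr_arg (coeff · 0) h, by simpa using congr_arg (coeff · 1) h⟩,
    ?_⟩
  rintro ⟨rfl, rfl⟩
  simp

theorem eq_zero_of_C_add_X_pow_mul_eq_zero (x a b : R) (k t : ℕ)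
    (h : (C x + X) ^ k * (C a * X ^ t + C b * X ^ (t + 1)) = 0) : a = 0 ∧ b = 0 := by
  have hmonic : ((X + C x) ^ k * X ^ t).Monic := ((monic_X_add_C x).pow k).mul (monic_X_pow t)
  refine C_add_C_mul_X_eq_zero_iff.1 (hmonic.mul_right_eq_zero_iff.1 ?_)
  rw [← h]
  ring

end Polynomial

theorem stmt_11_general {R : Type*} [CommRing R] (n k : ℕ)
    (hodd : Odd (n - k))
    (x β₂ β₄ b₁ b₃ : R)
    (p : R[X]) (hp : p = X ^ (n + 1) - C β₂ * X ^ n - C β₄ * X ^ (n - 1))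
    (h : ((AdjoinRoot.of p x + AdjoinRoot.root p) ^ k)
        * (AdjoinRoot.of p b₃ * AdjoinRoot.root p ^ ((n - k - 1) / 2)
            + AdjoinRoot.of p b₁ * AdjoinRoot.root p ^ ((n - k + 1) / 2)) = 0) :
    b₁ = 0 ∧ b₃ = 0 := by
  nontriviality R
  obtain ⟨t, ht⟩ := hodd
  rw [show (n - k - 1) / 2 = t by omega, show (n - k + 1) / 2 = t + 1 by omega] at h
  have hmonic : p.Monic := hp ▸ monic_X_pow_succ_sub_C_mul_X_pow_sub_C_mul_X_pow_pred n β₂ β₄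
  have hdeg_p : p.natDegree = n + 1 :=
    hp ▸ natDegree_X_pow_succ_sub_C_mul_X_pow_sub_C_mul_X_pow_pred n β₂ β₄
  have hdeg : ((C x + X) ^ k * (C b₃ * X ^ t + C b₁ * X ^ (t + 1))).natDegree ≤ k + t + 1 := by
    compute_degree
    omega
  refine (eq_zero_of_C_add_X_pow_mul_eq_zero x b₃ b₁ k t ?_).symm
  by_contra hne
  exact AdjoinRoot.mk_ne_zero_of_natDegree_lt hmonic hne (by omega)
    (by simpa [← AdjoinRoot.mk_C] using h)

/-- `H*(M)` is modelled as the free `H*(B)`-module with basis `1, u, …, uⁿ` and ring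
relation `u^{n+1} = β₄ u^{n-1} + β₂ uⁿ`, i.e. as `R[u]/(u^{n+1} - β₂ uⁿ - β₄ u^{n-1})`.
For `1 ≤ k < n` with `n - k` odd, if `α = b₃ u^{(n-k-1)/2} + b₁ u^{(n-k+1)/2}`
(with `x³ = 0` and `b·x² = 0` for positive-degree base classes `b`, as `dim B = 4`)
satisfies `(x+u)^k α = 0`, then `b₁ = 0` and `b₃ = 0`. -/
theorem stmt_11 {R : Type*} [CommRing R] (n k : ℕ) (hk1 : 1 ≤ k) (hk2 : k < n)
    (hodd : Odd (n - k))
    (x β₂ β₄ b₁ b₃ : R)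
    (hx : x ^ 3 = 0) (hb1 : b₁ * x ^ 2 = 0) (hb3 : b₃ * x ^ 2 = 0)
    (p : R[X]) (hp : p = X ^ (n + 1) - C β₂ * X ^ n - C β₄ * X ^ (n - 1))
    (h : ((AdjoinRoot.of p x + AdjoinRoot.root p) ^ k)
        * (AdjoinRoot.of p b₃ * AdjoinRoot.root p ^ ((n - k - 1) / 2)
            + AdjoinRoot.of p b₁ * AdjoinRoot.root p ^ ((n - k + 1) / 2)) = 0) :
    b₁ = 0 ∧ b₃ = 0 :=
  stmt_11_general n k hodd x β₂ β₄ b₁ b₃ p hp h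
end

section
/- With the same graded ring (u^{n+1} = β₄ u^{n−1} + β₂ uⁿ), suppose b₀ ∈ H⁰(B) ≅ ℝ and b₂ ∈ H²(B) satisfy b₂·n·x + b₀·((n(n−1)/2)x² + β₄) = 0 and b₂ + b₀(n x + β₂) = 0. If β₄ − n β₂ x − (n(n+1)/2) x² ≠ 0 in H⁴(B), then b₀ = 0 and b₂ = 0. -/
theorem smul_eq_zero_of_lefschetz_relations {K R : Type*} [Field K] [NeZero (2 : K)]
    [CommRing R] [Algebra K R] (n : ℕ) (x β₂ β₄ b₂ : R) (b₀ : K)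
    (h1 : b₂ * ((n : K) • x) + b₀ • (((n : K) * ((n : K) - 1) / 2) • x ^ 2 + β₄) = 0)
    (h2 : b₂ + b₀ • ((n : K) • x + β₂) = 0) :
    b₀ • (β₄ - (n : K) • (β₂ * x) - ((n : K) * ((n : K) + 1) / 2) • x ^ 2) = 0 := by
  have hsum : algebraMap K R ((n : K) * ((n : K) + 1) / 2) +
      algebraMap K R ((n : K) * ((n : K) - 1) / 2) = (n : R) ^ 2 := by
    rw [← map_add, ← map_natCast (algebraMap K R), ← map_pow]
    congr 1
    field_simp
    ring
  simp only [Algebra.smul_def, map_natCast] at h1 h2 ⊢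
  -- substitute `b₂ = -b₀ (n x + β₂)` into `h1`; the `x²` terms combine through `hsum`
  linear_combination h1 - (n * x) * h2 - algebraMap K R b₀ * x ^ 2 * hsum

/-- Kernel computation for the Lefschetz map `Ωⁿ` on `H²(M)`: if `b₀ ∈ H⁰(B) ≅ ℝ`
and `b₂ ∈ H²(B)` satisfy `b₂·n·x + b₀·((n(n-1)/2)x² + β₄) = 0` and
`b₂ + b₀(n x + β₂) = 0`, and if `β₄ - n β₂ x - (n(n+1)/2) x² ≠ 0` in `H⁴(B)`,
then `b₀ = 0` and `b₂ = 0`. -/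
theorem stmt_13 {R : Type*} [CommRing R] [Algebra ℝ R] (n : ℕ)
    (x β₂ β₄ b₂ : R) (b₀ : ℝ)
    (h1 : b₂ * ((n : ℝ) • x) + b₀ • (((n : ℝ) * ((n : ℝ) - 1) / 2) • x ^ 2 + β₄) = 0)
    (h2 : b₂ + b₀ • ((n : ℝ) • x + β₂) = 0)
    (hne : β₄ - (n : ℝ) • (β₂ * x) - ((n : ℝ) * ((n : ℝ) + 1) / 2) • x ^ 2 ≠ 0) :
    b₀ = 0 ∧ b₂ = 0 := by
  have hb₀ : b₀ = 0 :=
    (smul_eq_zero.mp (smul_eq_zero_of_lefschetz_relations n x β₂ β₄ b₂ b₀ h1 h2)).resolve_right hne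
  subst hb₀
  exact ⟨rfl, by simpa using h2⟩
end
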